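/- arXiv:1906.00697 — 3 statements merged into one kernel-verified Lean document; each statement's English description precedes it below -/
import Mathlib

section
/- (Equivalence of the non-zero-sum ASED game with the zero-sum ASED' game.) Let P_md and P_fa be m×n real matrices with P_fa constant along rows, and P_e = (1/2) • (P_md + P_fa). A pair of probability vectors (p*, q*) satisfies [p* maximizes p ↦ pᵀ · P_md · q* and q* minimizes q ↦ (p*)ᵀ · P_e · q over probability vectors] if and only if (p*, q*) is a Nash equilibrium of the zero-sum game with payoff P_e, i.e., p* maximizes p ↦ pᵀ · P_e · q* and q* minimizes q ↦ (p*)ᵀ · P_e · q over probability vectors. -/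
def probVec (k : ℕ) (p : Fin k → ℝ) : Prop := (∀ i, 0 ≤ p i) ∧ ∑ i, p i = 1

def pay {m n : ℕ} (M : Matrix (Fin m) (Fin n) ℝ) (p : Fin m → ℝ) (q : Fin n → ℝ) : ℝ :=
  ∑ i, ∑ j, p i * M i j * q j

lemma pay_smul_add {m n : ℕ} (A B : Matrix (Fin m) (Fin n) ℝ) (c : ℝ)
    (p : Fin m → ℝ) (q : Fin n → ℝ) :
    pay (c • (A + B)) p q = c * (pay A p q + pay B p q) := by
  simp only [pay, Matrix.smul_apply, Matrix.add_apply, smul_eq_mul,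
    Finset.mul_sum, ← Finset.sum_add_distrib]
  congr 1; funext i; congr 1; funext j; ring

lemma pay_const {m n : ℕ} (B : Matrix (Fin m) (Fin n) ℝ) (f : Fin n → ℝ)
    (hf : ∀ i j, B i j = f j) (p : Fin m → ℝ) (hp : probVec m p) (q : Fin n → ℝ) :
    pay B p q = ∑ j, f j * q j := by
  simp only [pay, hf]
  rw [Finset.sum_comm]
  calc ∑ j, ∑ i, p i * f j * q j = ∑ j, (∑ i, p i) * (f j * q j) := by
        congr 1; funext j; rw [Finset.sum_mul]; congr 1; funext i; ring
    _ = ∑ j, f j * q j := by rw [hp.2]; simp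

theorem stmt3 (m n : ℕ) (Pmd Pfa : Matrix (Fin m) (Fin n) ℝ) (f : Fin n → ℝ)
    (hf : ∀ i j, Pfa i j = f j)
    (Pe : Matrix (Fin m) (Fin n) ℝ) (hPe : Pe = (1/2 : ℝ) • (Pmd + Pfa))
    (ps : Fin m → ℝ) (hps : probVec m ps) (qs : Fin n → ℝ) (hqs : probVec n qs) :
    ((∀ p, probVec m p → pay Pmd p qs ≤ pay Pmd ps qs) ∧
      (∀ q, probVec n q → pay Pe ps qs ≤ pay Pe ps q)) ↔
    ((∀ p, probVec m p → pay Pe p qs ≤ pay Pe ps qs) ∧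
      (∀ q, probVec n q → pay Pe ps qs ≤ pay Pe ps q)) := by
  have key : ∀ p, probVec m p →
      pay Pe p qs = (1/2) * (pay Pmd p qs + ∑ j, f j * qs j) := by
    intro p hp
    rw [hPe, pay_smul_add, pay_const Pfa f hf p hp]
  constructor
  · rintro ⟨h1, h2⟩
    refine ⟨fun p hp => ?_, h2⟩
    rw [key p hp, key ps hps]
    have := h1 p hp
    linarith
  · rintro ⟨h1, h2⟩
    refine ⟨fun p hp => ?_, h2⟩
    have := h1 p hp
    rw [key p hp, key ps hps] at this
    linarith
end

section
/- Let P_md and P_fa be m×n real matrices with P_fa i j = f j, P_e = (1/2) • (P_md + P_fa), and suppose (p*, q*) is a saddle point of the zero-sum game with payoff P_e. Then (p*, q*) is a Nash equilibrium of the non-zero-sum game in which the row player's payoff is pᵀ · P_md · q (to be maximized) and the column player's payoff is −pᵀ · P_e · q (to be maximized): no unilateral deviation by either player strictly improves their own payoff. -/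
theorem stmt15 (m n : ℕ) (Pmd Pfa : Matrix (Fin m) (Fin n) ℝ) (f : Fin n → ℝ)
    (hf : ∀ i j, Pfa i j = f j)
    (Pe : Matrix (Fin m) (Fin n) ℝ) (hPe : Pe = (1/2 : ℝ) • (Pmd + Pfa))
    (ps : Fin m → ℝ) (hps : probVec m ps) (qs : Fin n → ℝ) (hqs : probVec n qs)
    (hA : ∀ p, probVec m p → pay Pe p qs ≤ pay Pe ps qs)
    (hD : ∀ q, probVec n q → pay Pe ps qs ≤ pay Pe ps q) :
    (∀ p, probVec m p → pay Pmd p qs ≤ pay Pmd ps qs) ∧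
    (∀ q, probVec n q → -(pay Pe ps q) ≤ -(pay Pe ps qs)) := by
  have split : ∀ (p : Fin m → ℝ) (q : Fin n → ℝ),
      pay Pe p q = 1/2 * pay Pmd p q + 1/2 * pay Pfa p q := by
    intro p q
    simp only [pay, hPe, Matrix.smul_apply, Matrix.add_apply, smul_eq_mul,
      Finset.mul_sum, ← Finset.sum_add_distrib]
    exact Finset.sum_congr rfl fun i _ => Finset.sum_congr rfl fun j _ => by ring
  have hfa : ∀ (p : Fin m → ℝ), probVec m p →
      pay Pfa p qs = ∑ j, f j * qs j := by
    intro p hp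
    simp only [pay, hf]
    have : ∀ i, ∑ j, p i * f j * qs j = p i * ∑ j, f j * qs j := by
      intro i; rw [Finset.mul_sum]; exact Finset.sum_congr rfl fun j _ => by ring
    simp only [this, ← Finset.sum_mul, hp.2, one_mul]
  constructor
  · intro p hp
    have := hA p hp
    rw [split, split, hfa p hp, hfa ps hps] at this
    linarith
  · intro q hq
    have := hD q hq
    linarith
end

section
/- Let P_md and P_fa be m×n real matrices with P_fa i j = f j, and P_e = (1/2) • (P_md + P_fa). If (p*, q*) is a Nash equilibrium of the non-zero-sum game where the row player maximizes pᵀ · P_md · q and the column player minimizes pᵀ · P_e · q, then (p*, q*) is a saddle point of the zero-sum game with payoff P_e. -/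
theorem stmt16 (m n : ℕ) (Pmd Pfa : Matrix (Fin m) (Fin n) ℝ) (f : Fin n → ℝ)
    (hf : ∀ i j, Pfa i j = f j)
    (Pe : Matrix (Fin m) (Fin n) ℝ) (hPe : Pe = (1/2 : ℝ) • (Pmd + Pfa))
    (ps : Fin m → ℝ) (hps : probVec m ps) (qs : Fin n → ℝ) (hqs : probVec n qs)
    (hA : ∀ p, probVec m p → pay Pmd p qs ≤ pay Pmd ps qs)
    (hD : ∀ q, probVec n q → pay Pe ps qs ≤ pay Pe ps q) :
    (∀ p, probVec m p → pay Pe p qs ≤ pay Pe ps qs) ∧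
    (∀ q, probVec n q → pay Pe ps qs ≤ pay Pe ps q) := by
  have hfa : ∀ p : Fin m → ℝ, (∑ i, p i) = 1 →
      pay Pfa p qs = ∑ j, f j * qs j := by
    intro p hp
    have : pay Pfa p qs = (∑ i, p i) * ∑ j, f j * qs j := by
      simp only [pay, hf, Finset.sum_mul, Finset.mul_sum]
      rw [Finset.sum_comm]
      exact Finset.sum_congr rfl fun i _ => Finset.sum_congr rfl fun j _ => by ring
    rw [this, hp, one_mul]
  refine ⟨fun p hp => ?_, hD⟩
  rw [hPe, pay_smul_add, pay_smul_add, hfa p hp.2, hfa ps hps.2]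
  have := hA p hp
  linarith
end
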